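/- arXiv:2010.08610 — 4 statements merged into one kernel-verified Lean document; each statement's English description precedes it below -/
import Mathlib

section
/- Fix (α, β) ∈ ℂ² with |α|² + |β|² = 1. For every w in the unit disk 𝔻, the function k_w^{α,β}(z) = (α + βz)·conj(α + βw) + z²·conj(w)²/(1 − z·conj(w)) belongs to H²_{α,β}, and for every f ∈ H²_{α,β} one has ⟨f, k_w^{α,β}⟩ = f(w). In particular, H²_{α,β} is a reproducing kernel Hilbert space with kernel k^{α,β}(z,w) = k_w^{α,β}(z), and ‖k_0^{α,β}‖² = |α|². -/
open Complex

noncomputable section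

/-- A coefficient sequence represents an element of the Hardy space `H²(𝔻)`
(analytic functions `z ↦ ∑ aₙ zⁿ` with square-summable coefficients). -/
def MemHardy2 (a : ℕ → ℂ) : Prop := Summable fun n => ‖a n‖ ^ 2

/-- A coefficient sequence represents an element of the constrained Hardy space
`H²_{α,β} = {f ∈ H²(𝔻) : β f(0) = α f'(0)}`; for `f(z) = ∑ aₙ zⁿ` one has
`f(0) = a 0` and `f'(0) = a 1`. -/
def MemH2ab (α β : ℂ) (a : ℕ → ℂ) : Prop := MemHardy2 a ∧ β * a 0 = α * a 1

/-- The `H²(𝔻)` inner product `⟨f, g⟩ = ∑ aₙ conj bₙ` of the functions with coefficient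
sequences `a` and `b`. -/
def hardyInner (a b : ℕ → ℂ) : ℂ := ∑' n, a n * (starRingEnd ℂ) (b n)

open ComplexConjugate

/-! The kernel `k_w^{α,β}` agrees with the Szegő kernel `∑ (z conj w)ⁿ` from degree two on, so
only its first two Taylor coefficients differ from `conj wⁿ`. For `f ∈ H²_{α,β}` these contribute
`(a₀ conj α + a₁ conj β)(α + βw)` to `⟨f, k_w⟩`; writing `(a₀, a₁) = c (α, β) + d (-conj β, conj α)`,
the constraint `β a₀ = α a₁` forces `d = 0`, and `|α|² + |β|² = 1` turns this into
`c (α + βw) = a₀ + a₁ w`, the missing two terms of `f(w)`. -/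

theorem tsum_eq_add_add_tsum_nat_add_two {M : Type*} [AddCommGroup M] [TopologicalSpace M]
    [IsTopologicalAddGroup M] [T2Space M] {f : ℕ → M} (hf : Summable f) :
    ∑' n, f n = f 0 + f 1 + ∑' n, f (n + 2) := by
  rw [← hf.sum_add_tsum_nat_add 2, Finset.sum_range_succ, Finset.sum_range_one]

namespace MemHardy2

variable {a b : ℕ → ℂ}

theorem summable_mul (ha : MemHardy2 a) (hb : MemHardy2 b) : Summable fun n => a n * b n :=
  Summable.of_norm_bounded ((ha.add hb).div_const 2) fun n => by
    rw [norm_mul]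
    nlinarith [sq_nonneg (‖a n‖ - ‖b n‖)]

theorem map_conj (ha : MemHardy2 a) : MemHardy2 fun n => conj (a n) := by
  simpa only [MemHardy2, RCLike.norm_conj] using ha

end MemHardy2

theorem memHardy2_pow {w : ℂ} (hw : ‖w‖ < 1) : MemHardy2 fun n => w ^ n := by
  have hw2 : ‖w‖ ^ 2 < 1 := by nlinarith [norm_nonneg w]
  refine (summable_geometric_of_lt_one (by positivity) hw2).congr fun n => ?_
  rw [norm_pow, ← pow_mul, ← pow_mul, mul_comm]

theorem MemHardy2.summable_mul_pow {a : ℕ → ℂ} {w : ℂ} (ha : MemHardy2 a) (hw : ‖w‖ < 1) :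
    Summable fun n => a n * w ^ n :=
  ha.summable_mul (memHardy2_pow hw)

/-- Taylor coefficients of `k_w^{α,β}`. -/
def kernelCoeff (α β w : ℂ) : ℕ → ℂ
  | 0 => α * conj (α + β * w)
  | 1 => β * conj (α + β * w)
  | n + 2 => conj w ^ (n + 2)

section Kernel

variable {α β w : ℂ}

theorem memH2ab_kernelCoeff (hw : ‖w‖ < 1) : MemH2ab α β (kernelCoeff α β w) := by
  refine ⟨?_, by simp only [kernelCoeff]; ring⟩
  rw [MemHardy2, ← summable_nat_add_iff 2]
  exact (summable_nat_add_iff 2).mpr (memHardy2_pow (w := conj w) (by rwa [RCLike.norm_conj]))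

theorem tsum_kernelCoeff_mul_pow (hw : ‖w‖ < 1) {z : ℂ} (hz : ‖z‖ < 1) :
    ∑' n, kernelCoeff α β w n * z ^ n =
      (α + β * z) * conj (α + β * w) + z ^ 2 * conj w ^ 2 / (1 - z * conj w) := by
  have hzw : ‖z * conj w‖ < 1 := by
    rw [norm_mul, RCLike.norm_conj]
    nlinarith [norm_nonneg z, norm_nonneg w]
  have hzw_ne : 1 - z * conj w ≠ 0 := by
    intro h
    rw [← sub_eq_zero.mp h, norm_one] at hzw
    exact hzw.false
  have tail : ∑' n, kernelCoeff α β w (n + 2) * z ^ (n + 2) =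
      (z * conj w) ^ 2 * (1 - z * conj w)⁻¹ := by
    rw [← tsum_geometric_of_norm_lt_one hzw, ← tsum_mul_left]
    congr 1 with n
    simp only [kernelCoeff]
    ring
  rw [tsum_eq_add_add_tsum_nat_add_two ((memH2ab_kernelCoeff hw).1.summable_mul_pow hz), tail]
  simp only [kernelCoeff]
  field_simp

theorem hardyInner_kernelCoeff (hαβ : ‖α‖ ^ 2 + ‖β‖ ^ 2 = 1) (hw : ‖w‖ < 1) {a : ℕ → ℂ}
    (ha : MemH2ab α β a) : hardyInner a (kernelCoeff α β w) = ∑' n, a n * w ^ n := by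
  obtain ⟨ha, hab⟩ := ha
  have hαβ' : conj α * α + conj β * β = 1 := by
    simp only [Complex.conj_mul']
    exact_mod_cast hαβ
  have head : a 0 * conj (kernelCoeff α β w 0) + a 1 * conj (kernelCoeff α β w 1) =
      a 0 * w ^ 0 + a 1 * w ^ 1 := by
    simp only [kernelCoeff, map_mul, map_add, RCLike.conj_conj]
    linear_combination (conj α * w - conj β) * hab + (a 0 + a 1 * w) * hαβ'
  rw [hardyInner,
    tsum_eq_add_add_tsum_nat_add_two (ha.summable_mul (memH2ab_kernelCoeff hw).1.map_conj), head,
    tsum_eq_add_add_tsum_nat_add_two (ha.summable_mul_pow hw)]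
  simp only [kernelCoeff, map_pow, RCLike.conj_conj]

end Kernel

theorem tsum_mul_zero_pow (a : ℕ → ℂ) : ∑' n, a n * 0 ^ n = a 0 := by
  rw [tsum_eq_single 0 fun n hn => by rw [zero_pow hn, mul_zero], pow_zero, mul_one]

/-- **Reproducing kernel for `H²_{α,β}`.**  Fix `(α,β)` with `|α|² + |β|² = 1` and `w` in
the unit disk.  The function `k_w^{α,β}(z) = (α+βz)·conj(α+βw) + z²·conj(w)²/(1 - z·conj w)`
belongs to `H²_{α,β}` (i.e. its coefficient sequence `b` is square-summable and satisfies
`β b 0 = α b 1`), it reproduces: `⟨f, k_w^{α,β}⟩ = f(w)` for all `f ∈ H²_{α,β}`, and at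
`w = 0` one has `‖k_0^{α,β}‖² = |α|²`. -/
theorem reproducing_kernel_H2ab (α β : ℂ)
    (hαβ : ‖α‖ ^ 2 + ‖β‖ ^ 2 = 1)
    (w : ℂ) (hw : ‖w‖ < 1) :
    ∃ b : ℕ → ℂ,
      MemH2ab α β b ∧
      (∀ z : ℂ, ‖z‖ < 1 →
        ∑' n, b n * z ^ n =
          (α + β * z) * (starRingEnd ℂ) (α + β * w)
            + z ^ 2 * ((starRingEnd ℂ) w) ^ 2 / (1 - z * (starRingEnd ℂ) w)) ∧
      (∀ a : ℕ → ℂ, MemH2ab α β a → hardyInner a b = ∑' n, a n * w ^ n) ∧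
      (w = 0 → hardyInner b b = ((‖α‖ : ℝ) : ℂ) ^ 2) := by
  refine ⟨kernelCoeff α β w, memH2ab_kernelCoeff hw, fun z hz => tsum_kernelCoeff_mul_pow hw hz,
    fun a ha => hardyInner_kernelCoeff hαβ hw ha, ?_⟩
  rintro rfl
  rw [hardyInner_kernelCoeff hαβ hw (memH2ab_kernelCoeff hw), tsum_mul_zero_pow]
  simp only [kernelCoeff, mul_zero, add_zero, Complex.mul_conj']
end
end

section
/- Fix (α, β) ∈ ℂ² with |α|² + |β|² = 1. If f is a bounded analytic function on the unit disk 𝔻 with f′(0) = 0 (i.e. f belongs to the Neil algebra 𝔄) and g ∈ H²_{α,β}, then the product fg belongs to H²_{α,β}. In particular, each space H²_{α,β} carries a representation of the Neil algebra 𝔄 by multiplication operators. -/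
/-!
Write `f = ∑ aₙ zⁿ`. The coefficients of `f g` are the Cauchy product `c` of `a` and `b`, and
`a₁ = f'(0) = 0` gives `c₀ = a₀ b₀`, `c₁ = a₀ b₁`, so `β c₀ = α c₁` is inherited from `b`.
Square-summability of `c` is the boundedness of multiplication by `f` on `H²`: by Parseval on the
circle of radius `r < 1`, `∑ |cₙ|² r²ⁿ = ∫ |f g|² ≤ C² ∫ |g|² = C² ∑ |bₙ|² r²ⁿ ≤ C² ∑ |bₙ|²`,
and letting `r → 1` bounds every partial sum of `∑ |cₙ|²`.
-/

open Complex

noncomputable section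

open Filter Topology Set Finset PowerSeries MeasureTheory AddCircle

section Fourier

variable {T : ℝ} [Fact (0 < T)]

theorem summable_smul_fourier {u : ℤ → ℂ} (hu : Summable (‖u ·‖)) :
    Summable fun n => u n • fourier (T := T) n :=
  Summable.of_norm (by simpa [norm_smul, fourier_norm] using hu)

theorem fourierCoeff_tsum_smul_fourier {u : ℤ → ℂ} (hu : Summable (‖u ·‖)) (m : ℤ) :
    fourierCoeff (⇑(∑' n, u n • fourier (T := T) n)) m = u m := by
  rw [← fourierCoeff_toLp, ← fourierBasis_repr, HilbertBasis.repr_apply_apply]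
  refine ((summable_smul_fourier hu).hasSum.mapL
    ((innerSL ℂ (fourierBasis m)).comp (ContinuousMap.toLp 2 haarAddCircle ℂ))).unique
    ((hasSum_ite_eq m (u m)).congr_fun fun n => ?_)
  rw [ContinuousLinearMap.comp_apply, map_smul, innerSL_apply_apply, inner_smul_right,
    coe_fourierBasis, orthonormal_iff_ite.mp orthonormal_fourier m n]
  rcases eq_or_ne n m with rfl | hnm
  · simp
  · simp [hnm, hnm.symm]

theorem hasSum_sq_norm_integral_tsum_smul_fourier {u : ℤ → ℂ} (hu : Summable (‖u ·‖)) :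
    HasSum (fun n => ‖u n‖ ^ 2)
      (∫ t, ‖(∑' n, u n • fourier (T := T) n) t‖ ^ 2 ∂haarAddCircle) := by
  set F := ∑' n, u n • fourier (T := T) n
  have hcoeff (n : ℤ) : fourierCoeff (ContinuousMap.toLp 2 haarAddCircle ℂ F) n = u n :=
    (fourierCoeff_toLp F n).trans (fourierCoeff_tsum_smul_fourier hu n)
  convert hasSum_sq_fourierCoeff (ContinuousMap.toLp 2 haarAddCircle ℂ F) using 1
  · simp only [hcoeff]
  · refine integral_congr_ae ?_
    filter_upwards [ContinuousMap.coeFn_toLp (p := 2) (𝕜 := ℂ) haarAddCircle F] with t ht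
    rw [ht]

theorem hasSum_sq_norm_integral_tsum_mul_pow {u : ℕ → ℂ} (hu : Summable (‖u ·‖)) :
    HasSum (fun n => ‖u n‖ ^ 2)
      (∫ t : AddCircle T, ‖∑' n, u n * (fourier 1 t : ℂ) ^ n‖ ^ 2 ∂haarAddCircle) := by
  set v : ℤ → ℂ := Function.extend Nat.cast u 0
  have hinj : Function.Injective (Nat.cast : ℕ → ℤ) := Nat.cast_injective
  have hv_map (F : ℂ → ℝ) (hF : F 0 = 0) :
      (fun n => F (v n)) = Function.extend Nat.cast (fun k => F (u k)) 0 := by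
    ext n
    by_cases h : ∃ k : ℕ, (k : ℤ) = n
    · obtain ⟨k, rfl⟩ := h
      simp [v, hinj.extend_apply]
    · simp [v, Function.extend_apply' _ _ _ h, hF]
  have hv : Summable (‖v ·‖) := by
    rw [hv_map _ norm_zero]
    exact (summable_extend_zero hinj).2 hu
  have H := hasSum_sq_norm_integral_tsum_smul_fourier (T := T) hv
  rw [hv_map (‖·‖ ^ 2) (by simp), hasSum_extend_zero hinj] at H
  convert H using 5 with t
  rw [← ContinuousMap.tsum_apply (summable_smul_fourier hv), ← hinj.tsum_eq]
  · simp [v, hinj.extend_apply, toCircle_nsmul]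
  · intro n hn
    by_contra h
    exact hn (by simp [v, Function.extend_apply' _ _ _ h])

end Fourier

theorem tsum_sq_norm_le_of_norm_tsum_mul_pow_le {u v : ℕ → ℂ} {C : ℝ} (hu : Summable (‖u ·‖))
    (hv : Summable (‖v ·‖))
    (h : ∀ w : ℂ, ‖w‖ = 1 → ‖∑' n, u n * w ^ n‖ ≤ C * ‖∑' n, v n * w ^ n‖) :
    ∑' n, ‖u n‖ ^ 2 ≤ C ^ 2 * ∑' n, ‖v n‖ ^ 2 := by
  have hcont : Continuous fun t : AddCircle 1 => ∑' n, v n * (fourier 1 t : ℂ) ^ n :=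
    continuous_tsum (fun n => by fun_prop) hv fun n t => by simp [Circle.norm_coe]
  rw [(hasSum_sq_norm_integral_tsum_mul_pow (T := 1) hu).tsum_eq,
    (hasSum_sq_norm_integral_tsum_mul_pow (T := 1) hv).tsum_eq, ← integral_const_mul]
  refine integral_mono_of_nonneg (ae_of_all _ fun t => sq_nonneg _)
    ((continuous_const.mul (hcont.norm.pow 2)).integrable_of_hasCompactSupport
      (HasCompactSupport.of_compactSpace _)) (ae_of_all _ fun t => ?_)
  calc _ ≤ (C * ‖∑' n, v n * (fourier 1 t : ℂ) ^ n‖) ^ 2 :=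
        pow_le_pow_left₀ (norm_nonneg _) (h _ (Circle.norm_coe _)) 2
    _ = _ := mul_pow ..

theorem summable_sq_norm_of_summable_norm {ι E : Type*} [SeminormedAddCommGroup E] {u : ι → E}
    (hu : Summable (‖u ·‖)) :
    Summable (‖u ·‖ ^ 2) :=
  (hu.mul_left (∑' j, ‖u j‖)).of_nonneg_of_le (fun _ => sq_nonneg _) fun k => by
    rw [sq]
    exact mul_le_mul_of_nonneg_right (hu.le_tsum k fun j _ => norm_nonneg _) (norm_nonneg _)

theorem summable_sq_norm_of_forall_tsum_le {c : ℕ → ℂ} {M : ℝ}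
    (hc : ∀ r ∈ Ioo (0 : ℝ) 1, Summable fun n => ‖c n * r ^ n‖)
    (hM : ∀ r ∈ Ioo (0 : ℝ) 1, ∑' n, ‖c n * r ^ n‖ ^ 2 ≤ M) :
    Summable fun n => ‖c n‖ ^ 2 := by
  refine summable_of_sum_range_le (c := M) (fun n => sq_nonneg _) fun N => ?_
  have hcont : Continuous fun r : ℝ => ∑ n ∈ range N, ‖c n * (r : ℂ) ^ n‖ ^ 2 := by fun_prop
  have hle : ∀ᶠ r : ℝ in 𝓝[<] 1, ∑ n ∈ range N, ‖c n * (r : ℂ) ^ n‖ ^ 2 ≤ M :=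
    eventually_of_mem (Ioo_mem_nhdsLT zero_lt_one) fun r hr =>
      ((summable_sq_norm_of_summable_norm (hc r hr)).sum_le_tsum _
        fun n _ => sq_nonneg _).trans (hM r hr)
  simpa using le_of_tendsto (hcont.continuousWithinAt.tendsto (x := 1) (s := Iio 1)) hle

theorem summable_norm_mul_pow_of_tendsto_zero {a : ℕ → ℂ} {w z : ℂ}
    (ha : Tendsto (fun n => a n * w ^ n) atTop (𝓝 0)) (hz : ‖z‖ < ‖w‖) :
    Summable fun n => ‖a n * z ^ n‖ := by
  have hw : 0 < ‖w‖ := (norm_nonneg z).trans_lt hz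
  have hq : ‖z‖ / ‖w‖ < 1 := (div_lt_one hw).2 hz
  refine summable_of_isBigO_nat (summable_geometric_of_lt_one (by positivity) hq) ?_
  have hsplit : (fun n => ‖a n * z ^ n‖) = fun n => ‖a n * w ^ n‖ * (‖z‖ / ‖w‖) ^ n := by
    ext n
    rw [norm_mul, norm_mul, norm_pow, norm_pow, div_pow, mul_assoc,
      mul_div_cancel₀ _ (by positivity)]
  rw [hsplit]
  simpa using (ha.norm.isBigO_one ℝ).mul (Asymptotics.isBigO_refl (fun n => (‖z‖ / ‖w‖) ^ n) atTop)

theorem summable_norm_mul_pow_of_forall_summable {a : ℕ → ℂ}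
    (ha : ∀ z ∈ Metric.ball (0 : ℂ) 1, Summable fun n => a n * z ^ n) {z : ℂ}
    (hz : z ∈ Metric.ball (0 : ℂ) 1) : Summable fun n => ‖a n * z ^ n‖ := by
  rw [mem_ball_zero_iff] at hz
  obtain ⟨ρ, hzρ, hρ⟩ := exists_between hz
  have hρ0 : 0 ≤ ρ := (norm_nonneg z).trans hzρ.le
  refine summable_norm_mul_pow_of_tendsto_zero (w := ρ)
    (ha ρ (by simpa [abs_of_nonneg hρ0] using hρ)).tendsto_atTop_zero ?_
  rwa [Complex.norm_real, Real.norm_of_nonneg hρ0]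

theorem MemHardy2.summable_norm_mul_pow {b : ℕ → ℂ} (hb : MemHardy2 b) {z : ℂ}
    (hz : z ∈ Metric.ball (0 : ℂ) 1) : Summable fun n => ‖b n * z ^ n‖ := by
  have hb0 : Tendsto b atTop (𝓝 0) := by
    rw [tendsto_zero_iff_norm_tendsto_zero]
    simpa using hb.tendsto_atTop_zero.sqrt
  exact summable_norm_mul_pow_of_tendsto_zero (w := 1) (by simpa using hb0) (by simpa using hz)

theorem coeff_mk_mul_mk_mul_pow (a b : ℕ → ℂ) (z : ℂ) (n : ℕ) :
    coeff n (mk a * mk b) * z ^ n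
      = ∑ kl ∈ antidiagonal n, (a kl.1 * z ^ kl.1) * (b kl.2 * z ^ kl.2) := by
  rw [coeff_mul, Finset.sum_mul]
  refine Finset.sum_congr rfl fun kl hkl => ?_
  rw [← mem_antidiagonal.mp hkl, pow_add, coeff_mk, coeff_mk]
  ring

theorem summable_norm_coeff_mk_mul_mk_mul_pow {a b : ℕ → ℂ} {z : ℂ}
    (ha : Summable fun n => ‖a n * z ^ n‖) (hb : Summable fun n => ‖b n * z ^ n‖) :
    Summable fun n => ‖coeff n (mk a * mk b) * z ^ n‖ := by
  simpa only [coeff_mk_mul_mk_mul_pow] using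
    summable_norm_sum_mul_antidiagonal_of_summable_norm ha hb

theorem tsum_coeff_mk_mul_mk_mul_pow {a b : ℕ → ℂ} {z : ℂ}
    (ha : Summable fun n => ‖a n * z ^ n‖) (hb : Summable fun n => ‖b n * z ^ n‖) :
    ∑' n, coeff n (mk a * mk b) * z ^ n = (∑' n, a n * z ^ n) * ∑' n, b n * z ^ n := by
  simp only [coeff_mk_mul_mk_mul_pow]
  exact (tsum_mul_tsum_eq_tsum_sum_antidiagonal_of_summable_norm ha hb).symm

theorem mul_coeff_zero_eq_mul_coeff_one {α β : ℂ} {a b : ℕ → ℂ} (ha : a 1 = 0)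
    (hb : β * b 0 = α * b 1) :
    β * coeff 0 (mk a * mk b) = α * coeff 1 (mk a * mk b) := by
  simp [coeff_mul, Finset.Nat.antidiagonal_succ, ha]
  linear_combination a 0 * hb

theorem memHardy2_coeff_mk_mul_mk {a b : ℕ → ℂ} {C : ℝ}
    (ha : ∀ z ∈ Metric.ball (0 : ℂ) 1, Summable fun n => a n * z ^ n)
    (hC : ∀ z ∈ Metric.ball (0 : ℂ) 1, ‖∑' n, a n * z ^ n‖ ≤ C) (hb : MemHardy2 b) :
    MemHardy2 fun n => coeff n (mk a * mk b) := by
  have hball {r : ℝ} (hr : r ∈ Ioo (0 : ℝ) 1) {w : ℂ} (hw : ‖w‖ = 1) :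
      (r * w : ℂ) ∈ Metric.ball (0 : ℂ) 1 := by
    simpa [hw, abs_of_pos hr.1] using hr.2
  have hc (r : ℝ) (hr : r ∈ Ioo (0 : ℝ) 1) :
      Summable fun n => ‖coeff n (mk a * mk b) * (r : ℂ) ^ n‖ := by
    have hr1 := mul_one (r : ℂ) ▸ hball hr norm_one
    exact summable_norm_coeff_mk_mul_mk_mul_pow (summable_norm_mul_pow_of_forall_summable ha hr1)
      (hb.summable_norm_mul_pow hr1)
  refine summable_sq_norm_of_forall_tsum_le (M := C ^ 2 * ∑' n, ‖b n‖ ^ 2) hc fun r hr => ?_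
  have hbr : Summable fun n => ‖b n * r ^ n‖ :=
    hb.summable_norm_mul_pow (mul_one (r : ℂ) ▸ hball hr norm_one)
  calc ∑' n, ‖coeff n (mk a * mk b) * r ^ n‖ ^ 2 ≤ C ^ 2 * ∑' n, ‖b n * r ^ n‖ ^ 2 := by
        refine tsum_sq_norm_le_of_norm_tsum_mul_pow_le (hc r hr) hbr fun w hw => ?_
        have hz := hball hr hw
        simp_rw [mul_assoc, ← mul_pow]
        rw [tsum_coeff_mk_mul_mk_mul_pow (summable_norm_mul_pow_of_forall_summable ha hz)
          (hb.summable_norm_mul_pow hz), norm_mul]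
        exact mul_le_mul_of_nonneg_right (hC _ hz) (norm_nonneg _)
    _ ≤ C ^ 2 * ∑' n, ‖b n‖ ^ 2 := by
        refine mul_le_mul_of_nonneg_left ((summable_sq_norm_of_summable_norm hbr).tsum_le_tsum
          (fun n => ?_) hb) (sq_nonneg C)
        gcongr
        rw [norm_mul, norm_pow, Complex.norm_real, Real.norm_of_nonneg hr.1.le]
        exact mul_le_of_le_one_right (norm_nonneg _) (pow_le_one₀ hr.1.le hr.2.le)

theorem neil_mult_H2ab_general (α β : ℂ)
    (f : ℂ → ℂ) (hfan : DifferentiableOn ℂ f (Metric.ball (0 : ℂ) 1))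
    (hfbd : ∃ C : ℝ, ∀ z ∈ Metric.ball (0 : ℂ) 1, ‖f z‖ ≤ C)
    (hf' : deriv f 0 = 0)
    (b : ℕ → ℂ) (hb : MemH2ab α β b) :
    ∃ c : ℕ → ℂ, MemH2ab α β c ∧
      ∀ z ∈ Metric.ball (0 : ℂ) 1, ∑' n, c n * z ^ n = f z * ∑' n, b n * z ^ n := by
  obtain ⟨C, hC⟩ := hfbd
  set a : ℕ → ℂ := fun n => (n.factorial : ℂ)⁻¹ * iteratedDeriv n f 0
  have hfa (z : ℂ) (hz : z ∈ Metric.ball (0 : ℂ) 1) : HasSum (fun n => a n * z ^ n) (f z) := by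
    simpa [a, mul_comm, mul_left_comm] using Complex.hasSum_taylorSeries_on_ball hfan hz
  have ha1 : a 1 = 0 := by simp [a, hf']
  have ha (z : ℂ) (hz : z ∈ Metric.ball (0 : ℂ) 1) := (hfa z hz).summable
  refine ⟨fun n => coeff n (mk a * mk b),
    ⟨memHardy2_coeff_mk_mul_mk ha (fun z hz => (hfa z hz).tsum_eq ▸ hC z hz) hb.1,
      mul_coeff_zero_eq_mul_coeff_one ha1 hb.2⟩, fun z hz => ?_⟩
  rw [tsum_coeff_mk_mul_mk_mul_pow (summable_norm_mul_pow_of_forall_summable ha hz)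
    (hb.1.summable_norm_mul_pow hz), (hfa z hz).tsum_eq]

/-- **`H²_{α,β}` carries a representation of the Neil algebra.**  Fix `(α,β)` with
`|α|² + |β|² = 1`.  If `f` is a bounded analytic function on the unit disk with
`f'(0) = 0` (i.e. `f` belongs to the Neil algebra `𝔄`) and `g ∈ H²_{α,β}` has
coefficient sequence `b`, then the product `f·g` belongs to `H²_{α,β}`: it has a
square-summable coefficient sequence `c` satisfying `β c 0 = α c 1` whose power series
sums to `f(z)·g(z)` on the disk. -/
theorem neil_mult_H2ab (α β : ℂ) (hαβ : ‖α‖ ^ 2 + ‖β‖ ^ 2 = 1)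
    (f : ℂ → ℂ) (hfan : DifferentiableOn ℂ f (Metric.ball (0 : ℂ) 1))
    (hfbd : ∃ C : ℝ, ∀ z ∈ Metric.ball (0 : ℂ) 1, ‖f z‖ ≤ C)
    (hf' : deriv f 0 = 0)
    (b : ℕ → ℂ) (hb : MemH2ab α β b) :
    ∃ c : ℕ → ℂ, MemH2ab α β c ∧
      ∀ z ∈ Metric.ball (0 : ℂ) 1, ∑' n, c n * z ^ n = f z * ∑' n, b n * z ^ n :=
  neil_mult_H2ab_general α β f hfan hfbd hf' b hb
end
end

section
/- Let M be a closed subspace of L²(μ) for a measure μ, and let φ ∈ L^∞(μ) be unimodular, i.e. |φ| = 1 almost everywhere. If there exists ψ ∈ L^∞(μ) which is a multiplier of M and satisfies ‖φ − ψ‖_{L^∞} < 1, then the Toeplitz operator T_φ : M → M is left-invertible. If moreover ψ is invertible in L^∞ with ψ⁻¹ also a multiplier of M, then T_φ is invertible. -/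
/-!
For `f ∈ M` the function `ψ f` lies in `M`, so `⟪T_φ f, ψ f⟫ = ⟪φ f, ψ f⟫`. Since `|φ| = 1` and
`‖φ f - ψ f‖ ≤ ε ‖f‖` with `ε = ‖φ - ψ‖_∞ < 1`, the real part of this inner product is at least
`(1 - ε) ‖f‖²`, while `‖ψ f‖ ≤ (1 + ε) ‖f‖`. Hence `T_φ` is bounded below, so it is left-invertible
on the Hilbert space `M`. If `ψ⁻¹` is a multiplier as well, any `g ⊥ ran T_φ` is `ψ f` with
`f = ψ⁻¹ g ∈ M`, and `0 = re ⟪T_φ f, ψ f⟫ ≥ (1 - ε) ‖f‖²` forces `g = 0`; thus the closed range of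
`T_φ` is all of `M`.
-/

open MeasureTheory Complex
open scoped ENNReal ComplexConjugate

noncomputable section

/-- `T : M → M` is the compressed multiplication (Toeplitz) operator `T_χ f = P_M (χ f)`
on a subspace `M ⊆ L²(μ)`: for every `f ∈ M` and every `g ∈ L²(μ)` representing the
function `χ·f`, the difference `g - T f` is orthogonal to `M` (so `T f` is the orthogonal
projection of `χ·f` onto `M`). -/
def IsToeplitz {X : Type*} [MeasurableSpace X] (μ : Measure X)
    (M : Submodule ℂ (Lp ℂ 2 μ)) (χ : X → ℂ) (T : ↥M →L[ℂ] ↥M) : Prop :=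
  ∀ f : ↥M, ∀ g : Lp ℂ 2 μ,
    ((g : X → ℂ) =ᵐ[μ] fun x => χ x * ((f : Lp ℂ 2 μ) : X → ℂ) x) →
    ∀ h ∈ M, (inner ℂ (g - ((T f : Lp ℂ 2 μ))) h : ℂ) = 0

/-- `ψ ∈ L^∞(μ)` is a multiplier of the subspace `M ⊆ L²(μ)`: `ψ f ∈ M` for every
`f ∈ M`. -/
def IsMultiplier {X : Type*} [MeasurableSpace X] (μ : Measure X)
    (M : Submodule ℂ (Lp ℂ 2 μ)) (ψ : X → ℂ) : Prop :=
  ∀ f : Lp ℂ 2 μ, f ∈ M → ∀ g : Lp ℂ 2 μ,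
    ((g : X → ℂ) =ᵐ[μ] fun x => ψ x * (f : X → ℂ) x) → g ∈ M

open scoped NNReal InnerProductSpace

section Hilbert

variable {𝕜 E F : Type*} [RCLike 𝕜]
  [NormedAddCommGroup E] [NormedAddCommGroup F] [InnerProductSpace 𝕜 F]

theorem one_sub_mul_norm_sq_le_re_inner_of_norm_sub_le {u v : F} {ε : ℝ}
    (h : ‖u - v‖ ≤ ε * ‖u‖) : (1 - ε) * ‖u‖ ^ 2 ≤ RCLike.re ⟪u, v⟫_𝕜 := by
  have hdev : RCLike.re ⟪u, u - v⟫_𝕜 ≤ ε * ‖u‖ ^ 2 :=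
    calc RCLike.re ⟪u, u - v⟫_𝕜 ≤ ‖u‖ * ‖u - v‖ := re_inner_le_norm u (u - v)
      _ ≤ ‖u‖ * (ε * ‖u‖) := by gcongr
      _ = ε * ‖u‖ ^ 2 := by ring
  have hsplit : RCLike.re ⟪u, v⟫_𝕜 = ‖u‖ ^ 2 - RCLike.re ⟪u, u - v⟫_𝕜 := by
    rw [inner_sub_right, map_sub, inner_self_eq_norm_sq, sub_sub_cancel]
  linarith

variable [NormedSpace 𝕜 E] [CompleteSpace E] [CompleteSpace F]

theorem ContinuousLinearMap.exists_leftInverse_of_antilipschitz {T : E →L[𝕜] F} {K : ℝ≥0}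
    (hT : AntilipschitzWith K T) : ∃ S : F →L[𝕜] E, S.comp T = ContinuousLinearMap.id 𝕜 E := by
  have : CompleteSpace T.range := hT.completeSpace_range_clm
  let e := T.equivRange hT.injective (hT.isClosed_range T.uniformContinuous)
  refine ⟨(e.symm : T.range →L[𝕜] E).comp T.range.orthogonalProjectionOnto,
    ContinuousLinearMap.ext fun x => ?_⟩
  have hproj : T.range.orthogonalProjectionOnto (T x) = ⟨T x, x, rfl⟩ :=
    Submodule.orthogonalProjectionOnto_mem_subspace_eq_self (⟨T x, x, rfl⟩ : T.range)
  simp [hproj, e]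

theorem ContinuousLinearMap.exists_inverse_of_antilipschitz {T : E →L[𝕜] F}
    {K : ℝ≥0} (hT : AntilipschitzWith K T) (hrange : T.rangeᗮ = ⊥) :
    ∃ S : F →L[𝕜] E, S.comp T = ContinuousLinearMap.id 𝕜 E ∧
      T.comp S = ContinuousLinearMap.id 𝕜 F := by
  have : CompleteSpace T.range := hT.completeSpace_range_clm
  let e := ContinuousLinearEquiv.ofBijective T (LinearMap.ker_eq_bot.mpr hT.injective)
    (Submodule.orthogonal_eq_bot_iff.mp hrange)
  exact ⟨e.symm, ContinuousLinearMap.ext e.symm_apply_apply,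
    ContinuousLinearMap.ext e.apply_symm_apply⟩

end Hilbert

namespace MeasureTheory.Lp

variable {X : Type*} [MeasurableSpace X] {μ : Measure X} {p : ℝ≥0∞}

theorem exists_ae_eq_mul_of_memLp_top {χ : X → ℂ} (hχ : MemLp χ ⊤ μ) (f : Lp ℂ p μ) :
    ∃ g : Lp ℂ p μ, (g : X → ℂ) =ᵐ[μ] fun x => χ x * f x :=
  ⟨_, ((Lp.memLp f).mul' hχ).coeFn_toLp⟩

theorem norm_le_mul_norm_of_ae_eq_mul {χ : X → ℂ} {C : ℝ} (hχ : ∀ᵐ x ∂μ, ‖χ x‖ ≤ C)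
    {f g : Lp ℂ p μ} (hg : (g : X → ℂ) =ᵐ[μ] fun x => χ x * f x) : ‖g‖ ≤ C * ‖f‖ :=
  Lp.norm_le_mul_norm_of_ae_le_mul <| by
    filter_upwards [hχ, hg] with x hχx hgx
    rw [hgx, norm_mul]
    exact mul_le_mul_of_nonneg_right hχx (norm_nonneg _)

theorem norm_eq_of_ae_eq_mul_of_unimodular {χ : X → ℂ} (hχ : ∀ᵐ x ∂μ, ‖χ x‖ = 1)
    {f g : Lp ℂ p μ} (hg : (g : X → ℂ) =ᵐ[μ] fun x => χ x * f x) : ‖g‖ = ‖f‖ := by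
  have hnorm : ∀ᵐ x ∂μ, ‖g x‖ = ‖f x‖ := by
    filter_upwards [hχ, hg] with x hχx hgx
    rw [hgx, norm_mul, hχx, one_mul]
  exact le_antisymm (Lp.norm_le_norm_of_ae_le (hnorm.mono fun x hx => hx.le))
    (Lp.norm_le_norm_of_ae_le (hnorm.mono fun x hx => hx.ge))

end MeasureTheory.Lp

theorem MeasureTheory.ae_norm_le_toReal_eLpNorm_top {X E : Type*} [MeasurableSpace X]
    [NormedAddCommGroup E] {μ : Measure X} {f : X → E} (hf : eLpNorm f ⊤ μ ≠ ∞) :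
    ∀ᵐ x ∂μ, ‖f x‖ ≤ (eLpNorm f ⊤ μ).toReal := by
  have hess : ∀ᵐ x ∂μ, ‖f x‖ₑ ≤ eLpNormEssSup f μ := ae_le_eLpNormEssSup
  filter_upwards [hess] with x hx
  rw [← toReal_enorm (f x)]
  exact ENNReal.toReal_mono hf (by rwa [eLpNorm_exponent_top])

section Toeplitz

variable {X : Type*} [MeasurableSpace X] {μ : Measure X} {M : Submodule ℂ (Lp ℂ 2 μ)}
  {φ ψ : X → ℂ} {T : M →L[ℂ] M} {ε : ℝ}

theorem ae_norm_le_one_add_of_unimodular (hφuni : ∀ᵐ x ∂μ, ‖φ x‖ = 1)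
    (hε : ∀ᵐ x ∂μ, ‖φ x - ψ x‖ ≤ ε) : ∀ᵐ x ∂μ, ‖ψ x‖ ≤ 1 + ε := by
  filter_upwards [hφuni, hε] with x hφx hεx
  linarith [norm_le_insert (φ x) (ψ x)]

theorem IsToeplitz.one_sub_mul_norm_sq_le_re_inner (hT : IsToeplitz μ M φ T)
    (hφ : MemLp φ ⊤ μ) (hφuni : ∀ᵐ x ∂μ, ‖φ x‖ = 1) (hε : ∀ᵐ x ∂μ, ‖φ x - ψ x‖ ≤ ε) (f : M)
    {v : Lp ℂ 2 μ} (hv : v ∈ M) (hvf : (v : X → ℂ) =ᵐ[μ] fun x => ψ x * (f : Lp ℂ 2 μ) x) :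
    (1 - ε) * ‖f‖ ^ 2 ≤ (⟪(T f : Lp ℂ 2 μ), v⟫_ℂ).re := by
  obtain ⟨u, hu⟩ := Lp.exists_ae_eq_mul_of_memLp_top hφ (f : Lp ℂ 2 μ)
  have hTf : ⟪(T f : Lp ℂ 2 μ), v⟫_ℂ = ⟪u, v⟫_ℂ := by
    have horth := hT f u hu v hv
    rwa [inner_sub_left, sub_eq_zero, eq_comm] at horth
  have hu_norm : ‖u‖ = ‖f‖ := Lp.norm_eq_of_ae_eq_mul_of_unimodular hφuni hu
  have hdiff : (⇑(u - v) : X → ℂ) =ᵐ[μ] fun x => (φ x - ψ x) * (f : Lp ℂ 2 μ) x := by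
    filter_upwards [Lp.coeFn_sub u v, hu, hvf] with x hsub hux hvx
    rw [hsub, Pi.sub_apply, hux, hvx, sub_mul]
  have hclose : ‖u - v‖ ≤ ε * ‖u‖ := hu_norm ▸ Lp.norm_le_mul_norm_of_ae_eq_mul hε hdiff
  rw [hTf, ← hu_norm]
  exact one_sub_mul_norm_sq_le_re_inner_of_norm_sub_le (𝕜 := ℂ) hclose

theorem IsToeplitz.one_sub_mul_norm_le (hT : IsToeplitz μ M φ T) (hφ : MemLp φ ⊤ μ)
    (hφuni : ∀ᵐ x ∂μ, ‖φ x‖ = 1) (hψ : MemLp ψ ⊤ μ) (hψmult : IsMultiplier μ M ψ)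
    (hε : ∀ᵐ x ∂μ, ‖φ x - ψ x‖ ≤ ε) (f : M) : (1 - ε) * ‖f‖ ≤ (1 + ε) * ‖T f‖ := by
  obtain rfl | hf := eq_or_ne f 0
  · simp
  obtain ⟨v, hv⟩ := Lp.exists_ae_eq_mul_of_memLp_top hψ (f : Lp ℂ 2 μ)
  have hv_norm : ‖v‖ ≤ (1 + ε) * ‖f‖ :=
    Lp.norm_le_mul_norm_of_ae_eq_mul (ae_norm_le_one_add_of_unimodular hφuni hε) hv
  refine le_of_mul_le_mul_right ?_ (norm_pos_iff.mpr hf)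
  calc (1 - ε) * ‖f‖ * ‖f‖ = (1 - ε) * ‖f‖ ^ 2 := by ring
    _ ≤ (⟪(T f : Lp ℂ 2 μ), v⟫_ℂ).re :=
      hT.one_sub_mul_norm_sq_le_re_inner hφ hφuni hε f (hψmult _ f.2 v hv) hv
    _ ≤ ‖T f‖ * ‖v‖ := re_inner_le_norm (𝕜 := ℂ) (T f : Lp ℂ 2 μ) v
    _ ≤ ‖T f‖ * ((1 + ε) * ‖f‖) := by gcongr
    _ = (1 + ε) * ‖T f‖ * ‖f‖ := by ring

theorem IsToeplitz.orthogonal_range_eq_bot (hT : IsToeplitz μ M φ T) (hφ : MemLp φ ⊤ μ)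
    (hφuni : ∀ᵐ x ∂μ, ‖φ x‖ = 1) (hε : ∀ᵐ x ∂μ, ‖φ x - ψ x‖ ≤ ε) (hε1 : ε < 1)
    {ψinv : X → ℂ} (hψinv : MemLp ψinv ⊤ μ) (hψψinv : (fun x => ψ x * ψinv x) =ᵐ[μ] fun _ => 1)
    (hψinvmult : IsMultiplier μ M ψinv) : T.rangeᗮ = ⊥ := by
  refine (Submodule.eq_bot_iff _).mpr fun g hg => ?_
  obtain ⟨f, hf⟩ := Lp.exists_ae_eq_mul_of_memLp_top hψinv (g : Lp ℂ 2 μ)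
  let fM : M := ⟨f, hψinvmult _ g.2 f hf⟩
  have hgf : (g : X → ℂ) =ᵐ[μ] fun x => ψ x * (fM : Lp ℂ 2 μ) x := by
    filter_upwards [hf, hψψinv] with x hfx hx
    rw [show (fM : Lp ℂ 2 μ) = f from rfl, hfx, ← mul_assoc, hx, one_mul]
  have hTf : ⟪(T fM : Lp ℂ 2 μ), g⟫_ℂ = 0 := by
    rw [← Submodule.coe_inner]
    exact Submodule.inner_right_of_mem_orthogonal (K := T.range) ⟨fM, rfl⟩ hg
  have hlow := hT.one_sub_mul_norm_sq_le_re_inner hφ hφuni hε fM g.2 hgf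
  rw [hTf, Complex.zero_re] at hlow
  have hfM : ‖fM‖ = 0 :=
    (sq_nonpos_iff _).mp (le_of_mul_le_mul_left (by rwa [mul_zero]) (sub_pos.mpr hε1))
  have hg_norm : ‖g‖ ≤ (1 + ε) * ‖fM‖ :=
    Lp.norm_le_mul_norm_of_ae_eq_mul (ae_norm_le_one_add_of_unimodular hφuni hε) hgf
  rw [hfM, mul_zero] at hg_norm
  exact norm_le_zero_iff.mp hg_norm

end Toeplitz

/-- If `φ ∈ L^∞(μ)` is unimodular and there is a multiplier `ψ` of the closed subspace
`M ⊆ L²(μ)` with `‖φ - ψ‖_∞ < 1`, then the Toeplitz operator `T_φ : M → M` is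
left-invertible; if moreover `ψ` is invertible in `L^∞` with inverse `ψinv` which is also
a multiplier of `M`, then `T_φ` is invertible. -/
theorem toeplitz_left_invertible_of_close_symbol
    {X : Type*} [MeasurableSpace X] (μ : Measure X)
    (M : Submodule ℂ (Lp ℂ 2 μ)) (hM : IsClosed (M : Set (Lp ℂ 2 μ)))
    (φ ψ : X → ℂ) (hφ : MemLp φ ⊤ μ)
    (hφuni : ∀ᵐ x ∂μ, ‖φ x‖ = 1)
    (hψ : MemLp ψ ⊤ μ) (hψmult : IsMultiplier μ M ψ)
    (hdist : eLpNorm (φ - ψ) ⊤ μ < 1)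
    (T : ↥M →L[ℂ] ↥M) (hT : IsToeplitz μ M φ T) :
    (∃ S : ↥M →L[ℂ] ↥M, S.comp T = ContinuousLinearMap.id ℂ ↥M) ∧
      (∀ ψinv : X → ℂ, MemLp ψinv ⊤ μ →
        ((fun x => ψ x * ψinv x) =ᵐ[μ] fun _ => (1 : ℂ)) →
        IsMultiplier μ M ψinv →
        ∃ S : ↥M →L[ℂ] ↥M, S.comp T = ContinuousLinearMap.id ℂ ↥M ∧
          T.comp S = ContinuousLinearMap.id ℂ ↥M) := by
  have : CompleteSpace M := hM.completeSpace_coe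
  set ε := (eLpNorm (φ - ψ) ⊤ μ).toReal
  have hε1 : ε < 1 := ENNReal.toReal_lt_of_lt_ofReal (by simpa using hdist)
  have hε : ∀ᵐ x ∂μ, ‖φ x - ψ x‖ ≤ ε :=
    ae_norm_le_toReal_eLpNorm_top (hdist.trans ENNReal.one_lt_top).ne
  have hanti : AntilipschitzWith ((1 + ε) / (1 - ε)).toNNReal T :=
    T.antilipschitz_of_bound fun f => by
      have hf := hT.one_sub_mul_norm_le hφ hφuni hψ hψmult hε f
      calc ‖f‖ ≤ (1 + ε) / (1 - ε) * ‖T f‖ := by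
            rw [div_mul_eq_mul_div, le_div_iff₀ (by linarith)]
            linarith
        _ ≤ _ := by gcongr; exact Real.le_coe_toNNReal _
  exact ⟨T.exists_leftInverse_of_antilipschitz hanti,
    fun ψinv hψinv hψψinv hψinvmult => T.exists_inverse_of_antilipschitz hanti
      (hT.orthogonal_range_eq_bot hφ hφuni hε hε1 hψinv hψψinv hψinvmult)⟩
end
end

section
/- Let 0 < c ≤ C < ∞. There is a constant K, depending only on c and C, with the following property. Let (X, m) be a measure space, H a closed subspace of L²(m), and w₁, w₂ : X → ℝ measurable weights with c ≤ wᵢ ≤ C almost everywhere (i = 1, 2). Let f ∈ L²(m) and suppose g₁, g₂ ∈ H satisfy, for i = 1, 2 and all h ∈ H, ∫_X (f − gᵢ)·conj(h)·wᵢ dm = 0 (i.e. gᵢ is the orthogonal projection of f onto H with respect to the wᵢ-weighted inner product). Then ∫_X |g₁ − g₂|² dm ≤ K · ‖w₁ − w₂‖_{L^∞} · ∫_X |f|² dm. -/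
open MeasureTheory Complex
open scoped ENNReal ComplexConjugate

universe u

/-!
With `D = g₁ - g₂ ∈ H`, subtracting the two orthogonality relations tested against `D` gives
`⟨D, D⟩_{w₁} = ⟨f - g₂, D⟩_{w₁ - w₂}`, hence `c ‖D‖² ≤ ‖w₁ - w₂‖_∞ ‖f - g₂‖ ‖D‖`. Testing the
relation for `gᵢ` against `gᵢ` itself gives `c ‖gᵢ‖ ≤ C ‖f‖`, which bounds `‖f - g₂‖` and `‖D‖`
by multiples of `‖f‖`. A weighted form `⟨u, v⟩_w` is the `L²` inner product of `v` with `w • u`,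
so it is bounded by `‖w‖_∞ ‖u‖ ‖v‖`.
-/

section WeightedInner

variable {X : Type*} [MeasurableSpace X] {m : Measure X}

lemma integral_norm_sq_eq_norm_sq (u : Lp ℂ 2 m) : ∫ x, ‖u x‖ ^ 2 ∂m = ‖u‖ ^ 2 := by
  rw [← inner_self_eq_norm_sq (𝕜 := ℂ) u, L2.inner_def, ← integral_re (L2.integrable_inner u u)]
  simp only [inner_self_eq_norm_sq]

lemma exists_Lp_eq_ofReal_mul {w : X → ℝ} {M : ℝ} (hw : AEStronglyMeasurable w m)
    (hM : ∀ᵐ x ∂m, |w x| ≤ M) (u : Lp ℂ 2 m) :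
    ∃ W : Lp ℂ 2 m, W =ᵐ[m] (fun x => (w x : ℂ) * u x) ∧ ‖W‖ ≤ M * ‖u‖ := by
  have hbound : ∀ᵐ x ∂m, ‖(w x : ℂ) * u x‖ ≤ M * ‖u x‖ := by
    filter_upwards [hM] with x hx
    rw [norm_mul, norm_real, Real.norm_eq_abs]
    exact mul_le_mul_of_nonneg_right hx (norm_nonneg _)
  have hmem : MemLp (fun x => (w x : ℂ) * u x) 2 m :=
    (Lp.memLp u).of_le_mul
      ((continuous_ofReal.comp_aestronglyMeasurable hw).mul (Lp.aestronglyMeasurable u)) hbound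
  refine ⟨hmem.toLp _, hmem.coeFn_toLp, Lp.norm_le_mul_norm_of_ae_le_mul ?_⟩
  filter_upwards [hmem.coeFn_toLp, hbound] with x hx hbx
  rwa [hx]

variable (m) in
noncomputable def weightedInner (w : X → ℝ) (u v : Lp ℂ 2 m) : ℂ :=
  ∫ x, u x * conj (v x) * (w x : ℂ) ∂m

lemma weightedInner_eq_inner {w : X → ℝ} {u v W : Lp ℂ 2 m}
    (hW : W =ᵐ[m] fun x => (w x : ℂ) * u x) : weightedInner m w u v = inner ℂ v W := by
  rw [L2.inner_def]
  refine integral_congr_ae ?_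
  filter_upwards [hW] with x hx
  rw [hx, RCLike.inner_apply]
  ring

lemma weightedInner_sub_left_eq_integral (w : X → ℝ) (u u' v : Lp ℂ 2 m) :
    weightedInner m w (u - u') v = ∫ x, (u x - u' x) * conj (v x) * (w x : ℂ) ∂m := by
  refine integral_congr_ae ?_
  filter_upwards [Lp.coeFn_sub u u'] with x hx
  rw [hx, Pi.sub_apply]

section Bounded

variable {w : X → ℝ} {M : ℝ} (hw : AEStronglyMeasurable w m) (hM : ∀ᵐ x ∂m, |w x| ≤ M)
include hw hM

lemma integrable_weightedInner (u v : Lp ℂ 2 m) :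
    Integrable (fun x => u x * conj (v x) * (w x : ℂ)) m := by
  obtain ⟨W, hW, -⟩ := exists_Lp_eq_ofReal_mul hw hM u
  refine (L2.integrable_inner v W).congr ?_
  filter_upwards [hW] with x hx
  rw [hx, RCLike.inner_apply]
  ring

lemma norm_weightedInner_le (u v : Lp ℂ 2 m) : ‖weightedInner m w u v‖ ≤ M * ‖u‖ * ‖v‖ := by
  obtain ⟨W, hW, hWu⟩ := exists_Lp_eq_ofReal_mul hw hM u
  rw [weightedInner_eq_inner hW]
  calc ‖inner ℂ v W‖ ≤ ‖v‖ * ‖W‖ := norm_inner_le_norm v W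
    _ ≤ ‖v‖ * (M * ‖u‖) := by gcongr
    _ = M * ‖u‖ * ‖v‖ := by ring

lemma weightedInner_sub_left (u u' v : Lp ℂ 2 m) :
    weightedInner m w (u - u') v = weightedInner m w u v - weightedInner m w u' v := by
  rw [weightedInner_sub_left_eq_integral, weightedInner, weightedInner,
    ← integral_sub (integrable_weightedInner hw hM u v) (integrable_weightedInner hw hM u' v)]
  simp only [sub_mul]

lemma mul_norm_sq_le_re_weightedInner_self {c : ℝ} (hc : ∀ᵐ x ∂m, c ≤ w x) (u : Lp ℂ 2 m) :
    c * ‖u‖ ^ 2 ≤ (weightedInner m w u u).re := by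
  have hint := integrable_weightedInner hw hM u u
  have hsq : Integrable (fun x => ‖u x‖ ^ 2) m :=
    (memLp_two_iff_integrable_sq_norm (Lp.aestronglyMeasurable u)).1 (Lp.memLp u)
  calc c * ‖u‖ ^ 2 = ∫ x, c * ‖u x‖ ^ 2 ∂m := by
        rw [integral_const_mul, integral_norm_sq_eq_norm_sq]
    _ ≤ ∫ x, RCLike.re (u x * conj (u x) * (w x : ℂ)) ∂m := by
        refine integral_mono_ae (hsq.const_mul c) hint.re ?_
        filter_upwards [hc] with x hx
        rw [mul_conj, ← ofReal_mul, RCLike.re_to_complex, ofReal_re, normSq_eq_norm_sq]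
        nlinarith [sq_nonneg ‖u x‖]
    _ = (weightedInner m w u u).re := integral_re hint

end Bounded

lemma weightedInner_sub_weight {w₁ w₂ : X → ℝ} {M₁ M₂ : ℝ} (hw₁ : AEStronglyMeasurable w₁ m)
    (hM₁ : ∀ᵐ x ∂m, |w₁ x| ≤ M₁) (hw₂ : AEStronglyMeasurable w₂ m) (hM₂ : ∀ᵐ x ∂m, |w₂ x| ≤ M₂)
    (u v : Lp ℂ 2 m) :
    weightedInner m w₁ u v - weightedInner m w₂ u v = weightedInner m (w₁ - w₂) u v := by
  rw [weightedInner, weightedInner, ← integral_sub (integrable_weightedInner hw₁ hM₁ u v)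
    (integrable_weightedInner hw₂ hM₂ u v)]
  refine integral_congr_ae (.of_forall fun x => ?_)
  simp only [Pi.sub_apply, ofReal_sub, mul_sub]

lemma mul_norm_sq_le_of_weightedInner_self_eq {c M M' : ℝ} {w w' : X → ℝ}
    (hw : AEStronglyMeasurable w m) (hM : ∀ᵐ x ∂m, |w x| ≤ M) (hc : ∀ᵐ x ∂m, c ≤ w x)
    (hw' : AEStronglyMeasurable w' m) (hM' : ∀ᵐ x ∂m, |w' x| ≤ M') {u v : Lp ℂ 2 m}
    (h : weightedInner m w u u = weightedInner m w' v u) : c * ‖u‖ ^ 2 ≤ M' * ‖v‖ * ‖u‖ :=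
  calc c * ‖u‖ ^ 2 ≤ (weightedInner m w u u).re := mul_norm_sq_le_re_weightedInner_self hw hM hc u
    _ ≤ ‖weightedInner m w u u‖ := re_le_norm _
    _ = ‖weightedInner m w' v u‖ := by rw [h]
    _ ≤ M' * ‖v‖ * ‖u‖ := norm_weightedInner_le hw' hM' v u

lemma ae_abs_le_of_ae_bounds {c C : ℝ} {w : X → ℝ} (hc : 0 ≤ c)
    (hw : ∀ᵐ x ∂m, c ≤ w x ∧ w x ≤ C) : ∀ᵐ x ∂m, |w x| ≤ C := by
  filter_upwards [hw] with x hx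
  exact abs_le.mpr ⟨by linarith [hx.1, hx.2], hx.2⟩

lemma ae_abs_sub_le_toReal_eLpNorm_top {c C : ℝ} {w₁ w₂ : X → ℝ}
    (hw₁ : AEStronglyMeasurable w₁ m) (hw₂ : AEStronglyMeasurable w₂ m)
    (hw₁b : ∀ᵐ x ∂m, c ≤ w₁ x ∧ w₁ x ≤ C) (hw₂b : ∀ᵐ x ∂m, c ≤ w₂ x ∧ w₂ x ≤ C) :
    ∀ᵐ x ∂m, |w₁ x - w₂ x| ≤ (eLpNorm (w₁ - w₂) ⊤ m).toReal := by
  have hmem : MemLp (w₁ - w₂) ⊤ m := by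
    refine memLp_top_of_bound (hw₁.sub hw₂) (C - c) ?_
    filter_upwards [hw₁b, hw₂b] with x h₁ h₂
    rw [Pi.sub_apply, Real.norm_eq_abs]
    exact abs_le.mpr ⟨by linarith [h₁.1, h₂.2], by linarith [h₁.2, h₂.1]⟩
  rw [toReal_eLpNorm hmem.1]
  exact ae_le_lpNorm_exponent_top hmem

section WeightedProjection

variable {c C : ℝ} (hc : 0 ≤ c)
include hc

lemma mul_norm_le_of_weightedInner_sub_eq_zero (hC : 0 ≤ C) {w : X → ℝ}
    (hw : AEStronglyMeasurable w m) (hwb : ∀ᵐ x ∂m, c ≤ w x ∧ w x ≤ C) {f g : Lp ℂ 2 m}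
    (h : weightedInner m w (f - g) g = 0) : c * ‖g‖ ≤ C * ‖f‖ := by
  have hwC := ae_abs_le_of_ae_bounds hc hwb
  rw [weightedInner_sub_left hw hwC, sub_eq_zero] at h
  have hsq := mul_norm_sq_le_of_weightedInner_self_eq hw hwC (hwb.mono fun _ => And.left) hw hwC
    h.symm
  rcases (norm_nonneg g).eq_or_lt with hg | hg
  · rw [← hg, mul_zero]
    positivity
  · exact le_of_mul_le_mul_right (by rw [mul_assoc, ← sq]; exact hsq) hg

lemma mul_norm_sq_sub_le {ε : ℝ} {w₁ w₂ : X → ℝ} (hw₁ : AEStronglyMeasurable w₁ m)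
    (hw₁b : ∀ᵐ x ∂m, c ≤ w₁ x ∧ w₁ x ≤ C) (hw₂ : AEStronglyMeasurable w₂ m)
    (hw₂b : ∀ᵐ x ∂m, c ≤ w₂ x ∧ w₂ x ≤ C) (hε : ∀ᵐ x ∂m, |w₁ x - w₂ x| ≤ ε)
    {f g₁ g₂ : Lp ℂ 2 m} (h₁ : weightedInner m w₁ (f - g₁) (g₁ - g₂) = 0)
    (h₂ : weightedInner m w₂ (f - g₂) (g₁ - g₂) = 0) :
    c * ‖g₁ - g₂‖ ^ 2 ≤ ε * ‖f - g₂‖ * ‖g₁ - g₂‖ := by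
  have hw₁C := ae_abs_le_of_ae_bounds hc hw₁b
  have hw₂C := ae_abs_le_of_ae_bounds hc hw₂b
  refine mul_norm_sq_le_of_weightedInner_self_eq hw₁ hw₁C (hw₁b.mono fun _ => And.left)
    (hw₁.sub hw₂) hε ?_
  calc weightedInner m w₁ (g₁ - g₂) (g₁ - g₂)
      = weightedInner m w₁ ((f - g₂) - (f - g₁)) (g₁ - g₂) := by rw [sub_sub_sub_cancel_left]
    _ = weightedInner m w₁ (f - g₂) (g₁ - g₂) := by
        rw [weightedInner_sub_left hw₁ hw₁C, h₁, sub_zero]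
    _ = weightedInner m w₁ (f - g₂) (g₁ - g₂) - weightedInner m w₂ (f - g₂) (g₁ - g₂) := by
        rw [h₂, sub_zero]
    _ = weightedInner m (w₁ - w₂) (f - g₂) (g₁ - g₂) :=
        weightedInner_sub_weight hw₁ hw₁C hw₂ hw₂C _ _

end WeightedProjection

end WeightedInner

lemma sq_norm_sub_le_of_mul_norm_le {E : Type*} [SeminormedAddCommGroup E] {c C ε : ℝ}
    (hc : 0 < c) (hε : 0 ≤ ε) {f g₁ g₂ : E} (hg₁ : c * ‖g₁‖ ≤ C * ‖f‖) (hg₂ : c * ‖g₂‖ ≤ C * ‖f‖)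
    (hD : c * ‖g₁ - g₂‖ ^ 2 ≤ ε * ‖f - g₂‖ * ‖g₁ - g₂‖) :
    ‖g₁ - g₂‖ ^ 2 ≤ 2 * C * (c + C) / c ^ 3 * ε * ‖f‖ ^ 2 := by
  have hD' : c * ‖g₁ - g₂‖ ≤ 2 * C * ‖f‖ := by
    calc c * ‖g₁ - g₂‖ ≤ c * (‖g₁‖ + ‖g₂‖) := by gcongr; exact norm_sub_le _ _
      _ ≤ 2 * C * ‖f‖ := by linarith
  have hE : c * ‖f - g₂‖ ≤ (c + C) * ‖f‖ := by
    calc c * ‖f - g₂‖ ≤ c * (‖f‖ + ‖g₂‖) := by gcongr; exact norm_sub_le _ _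
      _ ≤ (c + C) * ‖f‖ := by linarith
  have key : c ^ 3 * ‖g₁ - g₂‖ ^ 2 ≤ 2 * C * (c + C) * ε * ‖f‖ ^ 2 :=
    calc c ^ 3 * ‖g₁ - g₂‖ ^ 2 = c ^ 2 * (c * ‖g₁ - g₂‖ ^ 2) := by ring
      _ ≤ c ^ 2 * (ε * ‖f - g₂‖ * ‖g₁ - g₂‖) := by gcongr
      _ = ε * (c * ‖f - g₂‖) * (c * ‖g₁ - g₂‖) := by ring
      _ ≤ ε * ((c + C) * ‖f‖) * (2 * C * ‖f‖) := by
          gcongr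
          exact mul_nonneg hε (hE.trans' (by positivity))
      _ = 2 * C * (c + C) * ε * ‖f‖ ^ 2 := by ring
  calc ‖g₁ - g₂‖ ^ 2 = c ^ 3 * ‖g₁ - g₂‖ ^ 2 / c ^ 3 := by field_simp
    _ ≤ 2 * C * (c + C) * ε * ‖f‖ ^ 2 / c ^ 3 := by gcongr
    _ = 2 * C * (c + C) / c ^ 3 * ε * ‖f‖ ^ 2 := by ring

/-- **Weighted projections depend Lipschitz-continuously on the weight.**  For
`0 < c ≤ C < ∞` there is a constant `K = K(c, C)` such that: for any measure space
`(X, m)`, any closed subspace `H` of `L²(m)`, any measurable weights `w₁, w₂` with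
`c ≤ wᵢ ≤ C` a.e., any `f ∈ L²(m)`, and any `g₁, g₂ ∈ H` which are the orthogonal
projections of `f` onto `H` with respect to the `w₁`- resp. `w₂`-weighted inner products
(characterized by `∫ (f - gᵢ)·conj(h)·wᵢ dm = 0` for all `h ∈ H`), one has
`∫ |g₁ - g₂|² dm ≤ K ‖w₁ - w₂‖_{L^∞} ∫ |f|² dm`. -/
theorem weighted_projection_perturbation (c C : ℝ) (hc : 0 < c) (hcC : c ≤ C) :
    ∃ K : ℝ, ∀ (X : Type u) (_ : MeasurableSpace X) (m : Measure X)
      (H : Submodule ℂ (Lp ℂ 2 m)), IsClosed (H : Set (Lp ℂ 2 m)) →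
      ∀ w₁ w₂ : X → ℝ, Measurable w₁ → Measurable w₂ →
      (∀ᵐ x ∂m, c ≤ w₁ x ∧ w₁ x ≤ C) → (∀ᵐ x ∂m, c ≤ w₂ x ∧ w₂ x ≤ C) →
      ∀ f g₁ g₂ : Lp ℂ 2 m, g₁ ∈ H → g₂ ∈ H →
      (∀ h ∈ H, ∫ x, ((f : X → ℂ) x - (g₁ : X → ℂ) x) * conj ((h : X → ℂ) x) * (w₁ x : ℂ) ∂m = 0) →
      (∀ h ∈ H, ∫ x, ((f : X → ℂ) x - (g₂ : X → ℂ) x) * conj ((h : X → ℂ) x) * (w₂ x : ℂ) ∂m = 0) →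
      ∫ x, ‖(g₁ : X → ℂ) x - (g₂ : X → ℂ) x‖ ^ 2 ∂m ≤
        K * (eLpNorm (w₁ - w₂) ⊤ m).toReal * ∫ x, ‖(f : X → ℂ) x‖ ^ 2 ∂m := by
  refine ⟨2 * C * (c + C) / c ^ 3, ?_⟩
  intro X _ m H _ w₁ w₂ hw₁ hw₂ hw₁b hw₂b f g₁ g₂ hg₁ hg₂ horth₁ horth₂
  have hε := ae_abs_sub_le_toReal_eLpNorm_top hw₁.aestronglyMeasurable
    hw₂.aestronglyMeasurable hw₁b hw₂b
  have hp₁ : ∀ h ∈ H, weightedInner m w₁ (f - g₁) h = 0 := fun h hh =>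
    (weightedInner_sub_left_eq_integral w₁ f g₁ h).trans (horth₁ h hh)
  have hp₂ : ∀ h ∈ H, weightedInner m w₂ (f - g₂) h = 0 := fun h hh =>
    (weightedInner_sub_left_eq_integral w₂ f g₂ h).trans (horth₂ h hh)
  have hC : 0 ≤ C := hc.le.trans hcC
  have hD : ∫ x, ‖g₁ x - g₂ x‖ ^ 2 ∂m = ‖g₁ - g₂‖ ^ 2 := by
    rw [← integral_norm_sq_eq_norm_sq]
    refine integral_congr_ae ?_
    filter_upwards [Lp.coeFn_sub g₁ g₂] with x hx
    rw [hx, Pi.sub_apply]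
  rw [hD, integral_norm_sq_eq_norm_sq]
  exact sq_norm_sub_le_of_mul_norm_le hc ENNReal.toReal_nonneg
    (mul_norm_le_of_weightedInner_sub_eq_zero hc.le hC hw₁.aestronglyMeasurable hw₁b (hp₁ g₁ hg₁))
    (mul_norm_le_of_weightedInner_sub_eq_zero hc.le hC hw₂.aestronglyMeasurable hw₂b (hp₂ g₂ hg₂))
    (mul_norm_sq_sub_le hc.le hw₁.aestronglyMeasurable hw₁b hw₂.aestronglyMeasurable hw₂b hε
      (hp₁ _ (H.sub_mem hg₁ hg₂)) (hp₂ _ (H.sub_mem hg₁ hg₂)))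
end
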